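/- Let 0<q<1 and let b,c be real numbers with b>c>0. Fix n ∈ ℕ. Then the finite sequence k ↦ A_{n,k} = (q^b;q)_k (q^b;q)_{n-k} / ((q^{b-c};q)_k (q^{b+c};q)_{n-k}) is increasing for 0 ≤ k ≤ n; equivalently, for 0 ≤ k ≤ n-1 one has A_{n,k+1}/A_{n,k} = [(1-q^{b+k})/(1-q^{b-c+k})]·[(1-q^{b+c+n-k-1})/(1-q^{b+n-k-1})] ≥ 1. -/

import Mathlib

/-- The q-shifted factorial `(a;q)_n = ∏_{k=0}^{n-1} (1 - a q^k)`. -/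
noncomputable def qPoch (q a : ℝ) (n : ℕ) : ℝ :=
  ∏ k ∈ Finset.range n, (1 - a * q ^ k)

/-- `A_{n,k} = (q^b;q)_k (q^b;q)_{n-k} / ((q^{b-c};q)_k (q^{b+c};q)_{n-k})`. -/
noncomputable def A (q b c : ℝ) (n k : ℕ) : ℝ :=
  qPoch q (q ^ b) k * qPoch q (q ^ b) (n - k) /
    (qPoch q (q ^ (b - c)) k * qPoch q (q ^ (b + c)) (n - k))

/-
The ratio `A_{n,k+1} / A_{n,k}` telescopes to two factors `(1 - q^x) / (1 - q^y)`, and in each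
of them `y < x` because `c > 0`, so both are at least `1`.
-/

lemma qPoch_succ (q a : ℝ) (n : ℕ) : qPoch q a (n + 1) = qPoch q a n * (1 - a * q ^ n) :=
  Finset.prod_range_succ _ _

lemma qPoch_rpow_succ {q : ℝ} (hq : q ≠ 0) (e : ℝ) (n : ℕ) :
    qPoch q (q ^ e) (n + 1) = qPoch q (q ^ e) n * (1 - q ^ (e + n)) := by
  rw [qPoch_succ, Real.rpow_add_natCast hq]

lemma qPoch_pos {q a : ℝ} (hq0 : 0 ≤ q) (hq1 : q ≤ 1) (ha : a < 1) (n : ℕ) :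
    0 < qPoch q a n := by
  refine Finset.prod_pos fun k _ => sub_pos.mpr ?_
  have hqk : q ^ k ≤ 1 := pow_le_one₀ hq0 hq1
  rcases le_or_gt 0 a with ha0 | ha0
  · exact mul_lt_one_of_nonneg_of_lt_one_left ha0 ha hqk
  · nlinarith [pow_nonneg hq0 k]

section

variable {q : ℝ} (hq0 : 0 < q) (hq1 : q < 1)
include hq0 hq1

lemma qPoch_rpow_pos {e : ℝ} (he : 0 < e) (n : ℕ) : 0 < qPoch q (q ^ e) n :=
  qPoch_pos hq0.le hq1.le (Real.rpow_lt_one hq0.le hq1 he) n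

lemma one_sub_rpow_pos {e : ℝ} (he : 0 < e) (n : ℕ) : 0 < 1 - q ^ (e + n) :=
  sub_pos.mpr (Real.rpow_lt_one hq0.le hq1 (by positivity))

lemma one_le_one_sub_rpow_div_one_sub_rpow {x y : ℝ} (hyx : y ≤ x) (hy : 0 < y) :
    1 ≤ (1 - q ^ x) / (1 - q ^ y) :=
  (one_le_div (sub_pos.mpr (Real.rpow_lt_one hq0.le hq1 hy))).mpr
    (sub_le_sub_left (Real.rpow_le_rpow_of_exponent_ge hq0 hq1.le hyx) 1)

section

variable {b c : ℝ} (hbc : c < b) (hc : 0 < c)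
include hbc hc

lemma A_pos (n k : ℕ) : 0 < A q b c n k := by
  have hb : 0 < b := hc.trans hbc
  exact div_pos
    (mul_pos (qPoch_rpow_pos hq0 hq1 hb k) (qPoch_rpow_pos hq0 hq1 hb (n - k)))
    (mul_pos (qPoch_rpow_pos hq0 hq1 (sub_pos.mpr hbc) k)
      (qPoch_rpow_pos hq0 hq1 (by linarith) (n - k)))

lemma A_succ_div_A (k m : ℕ) :
    A q b c (k + 1 + m) (k + 1) / A q b c (k + 1 + m) k =
      (1 - q ^ (b + k)) / (1 - q ^ (b - c + k)) * ((1 - q ^ (b + c + m)) / (1 - q ^ (b + m))) := by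
  have hb : 0 < b := hc.trans hbc
  have hbc' : 0 < b - c := sub_pos.mpr hbc
  have hbc'' : 0 < b + c := by linarith
  have hkm : k + 1 + m - k = m + 1 := by omega
  have := (qPoch_rpow_pos hq0 hq1 hb k).ne'
  have := (qPoch_rpow_pos hq0 hq1 hb m).ne'
  have := (qPoch_rpow_pos hq0 hq1 hbc' k).ne'
  have := (qPoch_rpow_pos hq0 hq1 hbc'' m).ne'
  have := (one_sub_rpow_pos hq0 hq1 hb k).ne'
  have := (one_sub_rpow_pos hq0 hq1 hbc' k).ne'
  have := (one_sub_rpow_pos hq0 hq1 hbc'' m).ne'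
  have := (one_sub_rpow_pos hq0 hq1 hb m).ne'
  simp only [A, hkm, Nat.add_sub_cancel_left, qPoch_rpow_succ hq0.ne']
  field_simp

end

end

theorem statement_7 (q b c : ℝ) (hq0 : 0 < q) (hq1 : q < 1)
    (hbc : b > c) (hc : 0 < c) (n : ℕ) :
    ∀ k : ℕ, k + 1 ≤ n →
      A q b c n k ≤ A q b c n (k + 1) ∧
      A q b c n (k + 1) / A q b c n k =
        ((1 - q ^ (b + k)) / (1 - q ^ (b - c + k))) *
          ((1 - q ^ (b + c + n - k - 1)) / (1 - q ^ (b + n - k - 1))) ∧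
      1 ≤ A q b c n (k + 1) / A q b c n k := by
  intro k hk
  obtain ⟨m, rfl⟩ := Nat.exists_eq_add_of_le hk
  have hratio := A_succ_div_A hq0 hq1 hbc hc k m
  have hb : 0 < b := hc.trans hbc
  have hge : 1 ≤ A q b c (k + 1 + m) (k + 1) / A q b c (k + 1 + m) k := by
    rw [hratio]
    exact one_le_mul_of_one_le_of_one_le
      (one_le_one_sub_rpow_div_one_sub_rpow hq0 hq1 (by linarith) (by linarith))
      (one_le_one_sub_rpow_div_one_sub_rpow hq0 hq1 (by linarith) (by positivity))
  refine ⟨(one_le_div (A_pos hq0 hq1 hbc hc _ _)).mp hge, ?_, hge⟩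
  have hexp1 : b + c + ((k + 1 + m : ℕ) : ℝ) - k - 1 = b + c + m := by push_cast; ring
  have hexp2 : b + ((k + 1 + m : ℕ) : ℝ) - k - 1 = b + m := by push_cast; ring
  rw [hratio, hexp1, hexp2]
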